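/- Let Ŝ = {j : β̂ⱼ ≠ 0} for the adaptive elastic net minimizer β̂, and suppose X_Ŝᵀ X_Ŝ + λ₂ I is invertible (which always holds for λ₂ > 0). Then β̂ restricted to Ŝ equals (X_Ŝᵀ X_Ŝ + λ₂ I)⁻¹ (X_Ŝᵀ y − λ₁ w_Ŝ ∘ ŝ), where ŝ is the sign vector of β̂ on Ŝ and ∘ denotes componentwise multiplication. -/

import Mathlib

/-!
At a minimizer `β̂`, the objective restricted to the line `t ↦ update β̂ k t` has a minimum at
`t = β̂ₖ`; when `β̂ₖ ≠ 0` the penalty `wₖ |t|` is differentiable there, so the derivative vanishes: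
`(Xᵀ (X β̂ - y))ₖ + λ₂ β̂ₖ + λ₁ wₖ sign β̂ₖ = 0`. Since `β̂` vanishes off `Ŝ`, `X β̂ = X_Ŝ β̂_Ŝ`, and these
equations for `k ∈ Ŝ` say `(X_ŜᵀX_Ŝ + λ₂I) β̂_Ŝ = X_Ŝᵀy − λ₁ w_Ŝ ∘ ŝ`. The matrix is positive definite
for `λ₂ > 0`, hence invertible.
-/

open Matrix Function

section Calculus

variable {𝕜 F ι : Type*} [NontriviallyNormedField 𝕜] [NormedAddCommGroup F] [NormedSpace 𝕜 F]
  [Fintype ι] [DecidableEq ι]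

theorem hasDerivAt_sum_apply_update (φ : ι → 𝕜 → F) (β : ι → 𝕜) (k : ι) {d : F}
    (h : HasDerivAt (φ k) d (β k)) :
    HasDerivAt (fun t => ∑ j, φ j (update β k t j)) d (β k) := by
  have hterm : ∀ j ∈ Finset.univ,
      HasDerivAt (fun t => φ j (update β k t j)) (Pi.single (M := fun _ => F) k d j) (β k) := by
    intro j _
    by_cases hj : j = k
    · subst hj
      simpa using h
    · simpa [update_of_ne hj, Pi.single_eq_of_ne hj] using hasDerivAt_const (β k) (φ j (β j))
  simpa [Finset.sum_pi_single'] using HasDerivAt.fun_sum hterm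

theorem hasDerivAt_mulVec_update_apply {m : Type*} (X : Matrix m ι 𝕜) (β : ι → 𝕜) (k : ι)
    (i : m) : HasDerivAt (fun t => (X *ᵥ update β k t) i) (X i k) (β k) :=
  hasDerivAt_sum_apply_update (fun j s => X i j * s) β k
    (by simpa using (hasDerivAt_id (β k)).const_mul (X i k))

end Calculus

theorem Real.hasDerivAt_abs_sign {x : ℝ} (hx : x ≠ 0) :
    HasDerivAt (|·|) (Real.sign x) x := by
  rcases hx.lt_or_gt with h | h
  · simpa [Real.sign_of_neg h] using hasDerivAt_abs_neg h
  · simpa [Real.sign_of_pos h] using hasDerivAt_abs_pos h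

def activeSubmatrix {m ι R : Type*} [Zero R] (X : Matrix m ι R) (β : ι → R) :
    Matrix m {j // β j ≠ 0} R :=
  X.submatrix id Subtype.val

theorem activeSubmatrix_mulVec {m ι R : Type*} [Fintype ι] [Semiring R] [NoZeroDivisors R]
    (X : Matrix m ι R) (β : ι → R) [DecidablePred (β · ≠ 0)] :
    activeSubmatrix X β *ᵥ (fun s => β s) = X *ᵥ β := by
  ext i
  simp only [activeSubmatrix, mulVec, dotProduct, submatrix_apply, id]
  exact (Finset.sum_subtype (Finset.univ.filter (β · ≠ 0)) (by simp) fun j => X i j * β j).symm.trans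
    (Finset.sum_filter_of_ne fun j _ h => right_ne_zero_of_mul h)

theorem posDef_transpose_mul_self_add_smul_one {m n : Type*} [Fintype m] [Fintype n]
    [DecidableEq n] (A : Matrix m n ℝ) {c : ℝ} (hc : 0 < c) : (Aᵀ * A + c • 1).PosDef := by
  simpa only [conjTranspose_eq_transpose_of_trivial] using
    PosDef.posSemidef_add (posSemidef_conjTranspose_mul_self A) (PosDef.one.smul hc)

noncomputable def elasticNetObjective {m ι : Type*} [Fintype m] [Fintype ι] (y : m → ℝ)
    (X : Matrix m ι ℝ) (l1 l2 : ℝ) (w b : ι → ℝ) : ℝ :=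
  (1 / 2) * ∑ i, (y i - X.mulVec b i) ^ 2 + (1 / 2) * l2 * ∑ j, (b j) ^ 2 +
    l1 * ∑ j, w j * |b j|

section ElasticNet

variable {m ι : Type*} [Fintype m] [Fintype ι] [DecidableEq ι]
  (y : m → ℝ) (X : Matrix m ι ℝ) (l1 l2 : ℝ) (w β : ι → ℝ)

theorem hasDerivAt_elasticNetObjective_update {k : ι} (hk : β k ≠ 0) :
    HasDerivAt (fun t => elasticNetObjective y X l1 l2 w (update β k t))
      ((Xᵀ *ᵥ (X *ᵥ β - y)) k + l2 * β k + l1 * w k * Real.sign (β k)) (β k) := by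
  have hloss : HasDerivAt (fun t => ∑ i, (y i - (X *ᵥ update β k t) i) ^ 2)
      (∑ i, 2 * (y i - (X *ᵥ β) i) * -X i k) (β k) := by
    refine HasDerivAt.fun_sum fun i _ => ?_
    simpa using ((hasDerivAt_mulVec_update_apply X β k i).const_sub (y i)).fun_pow 2
  have hridge : HasDerivAt (fun t => ∑ j, update β k t j ^ 2) (2 * β k) (β k) :=
    hasDerivAt_sum_apply_update (fun _ s => s ^ 2) β k (by simpa using hasDerivAt_pow 2 (β k))
  have hlasso : HasDerivAt (fun t => ∑ j, w j * |update β k t j|) (w k * Real.sign (β k)) (β k) :=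
    hasDerivAt_sum_apply_update (fun j s => w j * |s|) β k
      ((Real.hasDerivAt_abs_sign hk).const_mul (w k))
  refine (((hloss.const_mul (1 / 2)).add (hridge.const_mul ((1 / 2) * l2))).add
    (hlasso.const_mul l1)).congr_deriv ?_
  have hgrad : 1 / 2 * ∑ i, 2 * (y i - (X *ᵥ β) i) * -X i k = (Xᵀ *ᵥ (X *ᵥ β - y)) k := by
    simp only [Finset.mul_sum]
    exact Finset.sum_congr rfl fun i _ => by simp only [Pi.sub_apply, transpose_apply]; ring
  rw [hgrad]
  ring

theorem elasticNet_kkt_of_ne_zero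
    (hmin : ∀ b, elasticNetObjective y X l1 l2 w β ≤ elasticNetObjective y X l1 l2 w b)
    {k : ι} (hk : β k ≠ 0) :
    (Xᵀ *ᵥ (X *ᵥ β - y)) k + l2 * β k + l1 * w k * Real.sign (β k) = 0 :=
  IsLocalMin.hasDerivAt_eq_zero
    (Filter.Eventually.of_forall fun t => by simpa only [update_eq_self] using hmin (update β k t))
    (hasDerivAt_elasticNetObjective_update y X l1 l2 w β hk)

theorem elasticNet_normal_equations_active [DecidablePred (β · ≠ 0)]
    (hmin : ∀ b, elasticNetObjective y X l1 l2 w β ≤ elasticNetObjective y X l1 l2 w b) :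
    ((activeSubmatrix X β)ᵀ * activeSubmatrix X β + l2 • (1 : Matrix _ _ ℝ)) *ᵥ
        (fun s : {j // β j ≠ 0} => β s) =
      (activeSubmatrix X β)ᵀ *ᵥ y - fun s : {j // β j ≠ 0} => l1 * w s * Real.sign (β s) := by
  ext s
  have hkkt := elasticNet_kkt_of_ne_zero y X l1 l2 w β hmin s.prop
  have hgram : ((activeSubmatrix X β)ᵀ * activeSubmatrix X β) *ᵥ
      (fun s : {j // β j ≠ 0} => β s) =
      (activeSubmatrix X β)ᵀ *ᵥ (X *ᵥ β) := by
    rw [← mulVec_mulVec, activeSubmatrix_mulVec]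
  rw [mulVec_sub, Pi.sub_apply] at hkkt
  simp only [add_mulVec, hgram, smul_mulVec, one_mulVec, Pi.add_apply, Pi.smul_apply,
    smul_eq_mul, Pi.sub_apply]
  change (Xᵀ *ᵥ (X *ᵥ β)) s + l2 * β s = (Xᵀ *ᵥ y) s - l1 * w s * Real.sign (β s)
  linarith

end ElasticNet

theorem aen_active_set_closed_form_general {n p : ℕ} (y : Fin n → ℝ)
    (X : Matrix (Fin n) (Fin p) ℝ) (l1 l2 : ℝ) (w : Fin p → ℝ)
    (hl2 : 0 < l2)
    (βhat : Fin p → ℝ) [DecidablePred fun j => βhat j ≠ 0]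
    (hmin : ∀ b : Fin p → ℝ,
      (1 / 2) * ∑ i, (y i - X.mulVec βhat i) ^ 2 + (1 / 2) * l2 * ∑ j, (βhat j) ^ 2 +
        l1 * ∑ j, w j * |βhat j| ≤
      (1 / 2) * ∑ i, (y i - X.mulVec b i) ^ 2 + (1 / 2) * l2 * ∑ j, (b j) ^ 2 +
        l1 * ∑ j, w j * |b j|) :
    letI XS : Matrix (Fin n) {j // βhat j ≠ 0} ℝ := X.submatrix id Subtype.val
    IsUnit (XSᵀ * XS + l2 • (1 : Matrix {j // βhat j ≠ 0} {j // βhat j ≠ 0} ℝ)).det ∧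
    (fun s : {j // βhat j ≠ 0} => βhat s.val) =
      (XSᵀ * XS + l2 • (1 : Matrix {j // βhat j ≠ 0} {j // βhat j ≠ 0} ℝ))⁻¹.mulVec
        (XSᵀ.mulVec y - fun s => l1 * w s.val * Real.sign (βhat s.val)) := by
  have hunit :=
    (posDef_transpose_mul_self_add_smul_one (activeSubmatrix X βhat) hl2).det_pos.ne'.isUnit
  have hnormal := elasticNet_normal_equations_active y X l1 l2 w βhat hmin
  unfold activeSubmatrix at hunit hnormal
  refine ⟨hunit, ?_⟩
  rw [← hnormal, mulVec_mulVec, nonsing_inv_mul _ hunit, one_mulVec]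

/-- Closed form of the adaptive elastic net on its active set
`Ŝ = {j : β̂ⱼ ≠ 0}`: the Gram matrix `X_ŜᵀX_Ŝ + λ₂I` is invertible, and
`β̂_Ŝ = (X_ŜᵀX_Ŝ + λ₂I)⁻¹ (X_Ŝᵀy − λ₁ w_Ŝ ∘ ŝ)`. -/
theorem aen_active_set_closed_form {n p : ℕ} (y : Fin n → ℝ)
    (X : Matrix (Fin n) (Fin p) ℝ) (l1 l2 : ℝ) (w : Fin p → ℝ)
    (hl1 : 0 ≤ l1) (hl2 : 0 < l2) (hw : ∀ j, 0 < w j)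
    (βhat : Fin p → ℝ) [DecidablePred fun j => βhat j ≠ 0]
    (hmin : ∀ b : Fin p → ℝ,
      (1 / 2) * ∑ i, (y i - X.mulVec βhat i) ^ 2 + (1 / 2) * l2 * ∑ j, (βhat j) ^ 2 +
        l1 * ∑ j, w j * |βhat j| ≤
      (1 / 2) * ∑ i, (y i - X.mulVec b i) ^ 2 + (1 / 2) * l2 * ∑ j, (b j) ^ 2 +
        l1 * ∑ j, w j * |b j|) :
    letI XS : Matrix (Fin n) {j // βhat j ≠ 0} ℝ := X.submatrix id Subtype.val
    IsUnit (XSᵀ * XS + l2 • (1 : Matrix {j // βhat j ≠ 0} {j // βhat j ≠ 0} ℝ)).det ∧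
    (fun s : {j // βhat j ≠ 0} => βhat s.val) =
      (XSᵀ * XS + l2 • (1 : Matrix {j // βhat j ≠ 0} {j // βhat j ≠ 0} ℝ))⁻¹.mulVec
        (XSᵀ.mulVec y - fun s => l1 * w s.val * Real.sign (βhat s.val)) :=
  aen_active_set_closed_form_general y X l1 l2 w hl2 βhat hmin
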